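/- Let G = (V, E) be a finite digraph and let (V1, E1), (V2, E2) be a separation of G along a pair {u, v} of distinct vertices. If u dominates v in G and v has no incoming edge in E2 (that is, v is a source of H2), then u dominates v in H1 = (V1, E1), i.e., there is a directed path from u to v using only edges of E1. -/

import Mathlib

/-!
Read the path from `u` to `v` backwards from `v`. As long as it uses edges of `E1`, it stays
inside `V1`. The first edge of `E2` met this way ends at a vertex of `V1 ∩ V2 = {u, v}`; it
cannot end at `v`, a source of `H2`, so it ends at `u`, and the part of the path already read
is a path from `u` to `v` in `H1`.
-/

/-- `x` dominates `y` in the digraph with edge set `E`: there is a directed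
path with at least one edge from `x` to `y`. -/
def Dominates {α : Type*} (E : Finset (α × α)) (x y : α) : Prop :=
  Relation.TransGen (fun a b => (a, b) ∈ E) x y

/-- A separation of the finite digraph `(V, E)` along the pair `{u, v}` of
distinct vertices into `H1 = (V1, E1)` and `H2 = (V2, E2)`. -/
structure Separation {α : Type*} [DecidableEq α] (V : Finset α) (E : Finset (α × α))
    (u v : α) (V1 V2 : Finset α) (E1 E2 : Finset (α × α)) : Prop where
  ne : u ≠ v
  vUnion : V1 ∪ V2 = V
  vInter : V1 ∩ V2 = {u, v}
  eDisjoint : Disjoint E1 E2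
  eUnion : E1 ∪ E2 = E
  mem1 : ∀ e ∈ E1, e.1 ∈ V1 ∧ e.2 ∈ V1
  mem2 : ∀ e ∈ E2, e.1 ∈ V2 ∧ e.2 ∈ V2

namespace Separation

variable {α : Type*} [DecidableEq α] {V V1 V2 : Finset α} {E E1 E2 : Finset (α × α)} {u v : α}

theorem mem_or_mem_of_mem (hsep : Separation V E u v V1 V2 E1 E2) {e : α × α} (he : e ∈ E) :
    e ∈ E1 ∨ e ∈ E2 :=
  Finset.mem_union.mp (hsep.eUnion ▸ he)

theorem eq_or_eq_of_mem_of_mem (hsep : Separation V E u v V1 V2 E1 E2) {x : α} (h1 : x ∈ V1)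
    (h2 : x ∈ V2) : x = u ∨ x = v := by
  have hx : x ∈ V1 ∩ V2 := Finset.mem_inter.mpr ⟨h1, h2⟩
  simpa [hsep.vInter] using hx

theorem dominates_left_or_of_dominates (hsep : Separation V E u v V1 V2 E1 E2)
    (hvsrc : ∀ e ∈ E2, e.2 ≠ v) {x : α} (hx : Dominates E x v) :
    Dominates E1 u v ∨ x ∈ V1 ∧ Dominates E1 x v := by
  induction hx using Relation.TransGen.head_induction_on with
  | single h =>
    rcases hsep.mem_or_mem_of_mem h with h1 | h2
    · exact .inr ⟨(hsep.mem1 _ h1).1, .single h1⟩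
    · exact absurd rfl (hvsrc _ h2)
  | @head _ c h _ ih =>
    obtain huv | ⟨hc, hcv⟩ := ih
    · exact .inl huv
    rcases hsep.mem_or_mem_of_mem h with h1 | h2
    · exact .inr ⟨(hsep.mem1 _ h1).1, .head h1 hcv⟩
    · obtain rfl | rfl := hsep.eq_or_eq_of_mem_of_mem hc (hsep.mem2 _ h2).2
      · exact .inl hcv
      · exact absurd rfl (hvsrc _ h2)

end Separation

/-- If `u` dominates `v` in `G` and `v` has no incoming edge in `E2`, then
`u` dominates `v` in `H1`, i.e. via a directed path using only edges of `E1`. -/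
theorem stmt3 {α : Type*} [DecidableEq α] (V V1 V2 : Finset α)
    (E E1 E2 : Finset (α × α)) (u v : α)
    (hsep : Separation V E u v V1 V2 E1 E2)
    (hdom : Dominates E u v)
    (hvsrc : ∀ e ∈ E2, e.2 ≠ v) :
    Dominates E1 u v :=
  (hsep.dominates_left_or_of_dominates hvsrc hdom).elim id And.right
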